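/- arXiv:2507.03447 — 5 statements merged into one kernel-verified Lean document; each statement's English description precedes it below -/
import Mathlib

section
/- Let (X,d) be a pseudometric space and D > 0 with d(x,y) ≤ D for all x,y ∈ X. Let ε > 0, set δ = εD/2 and z = ⌈2/ε⌉. Let k ≥ 1 and s₀,…,s_{k−1} ∈ X. For v ∈ X let r(v) be the greatest integer j with j·δ ≤ d(v,s₀), and let X̂_v = {(i,j) : i ∈ ℤ, 1 ≤ i ≤ k−1, j ∈ ℤ, −z ≤ j ≤ z, d(v,s_i) − d(v,s₀) ≤ j·δ}. If u, v ∈ X satisfy r(u) = r(v) and X̂_u = X̂_v, then |d(u,s_i) − d(v,s_i)| ≤ εD for every i with 0 ≤ i ≤ k−1. -/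
/-- Rounding claim inside the core-set existence lemma: two points with the same
rounded distance to `s₀` and the same threshold set `X̂` have `ℓ∞`-close distance
tuples. -/
theorem stmt1 {X : Type*} [PseudoMetricSpace X] (D : ℝ) (hD : 0 < D)
    (hbdd : ∀ x y : X, dist x y ≤ D) (ε : ℝ) (hε : 0 < ε)
    (k : ℕ) (hk : 1 ≤ k) (s : Fin k → X) (u v : X)
    (hr : ⌊dist u (s ⟨0, hk⟩) / (ε * D / 2)⌋ = ⌊dist v (s ⟨0, hk⟩) / (ε * D / 2)⌋)
    (hX : {p : Fin k × ℤ | 1 ≤ (p.1 : ℕ) ∧ -⌈2 / ε⌉ ≤ p.2 ∧ p.2 ≤ ⌈2 / ε⌉ ∧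
            dist u (s p.1) - dist u (s ⟨0, hk⟩) ≤ (p.2 : ℝ) * (ε * D / 2)}
        = {p : Fin k × ℤ | 1 ≤ (p.1 : ℕ) ∧ -⌈2 / ε⌉ ≤ p.2 ∧ p.2 ≤ ⌈2 / ε⌉ ∧
            dist v (s p.1) - dist v (s ⟨0, hk⟩) ≤ (p.2 : ℝ) * (ε * D / 2)}) :
    ∀ i : Fin k, |dist u (s i) - dist v (s i)| ≤ ε * D := by
  have hδ : 0 < ε * D / 2 := by positivity
  set δ : ℝ := ε * D / 2 with hδdef
  set s0 : X := s ⟨0, hk⟩ with hs0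
  -- the rounded distance hypothesis gives closeness to s0
  have h0 : |dist u s0 - dist v s0| < δ := by
    have h1 : dist u s0 / δ < ⌊dist u s0 / δ⌋ + 1 := Int.lt_floor_add_one _
    have h2 : (⌊dist u s0 / δ⌋ : ℝ) ≤ dist v s0 / δ := by rw [hr]; exact Int.floor_le _
    have h3 : dist v s0 / δ < ⌊dist v s0 / δ⌋ + 1 := Int.lt_floor_add_one _
    have h4 : (⌊dist v s0 / δ⌋ : ℝ) ≤ dist u s0 / δ := by rw [← hr]; exact Int.floor_le _
    rw [abs_sub_lt_iff]
    constructor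
    · have : dist u s0 / δ - dist v s0 / δ < 1 := by linarith
      rw [div_sub_div_same] at this
      calc dist u s0 - dist v s0 = (dist u s0 - dist v s0) / δ * δ := by
            field_simp
        _ < 1 * δ := by exact mul_lt_mul_of_pos_right this hδ
        _ = δ := one_mul δ
    · have : dist v s0 / δ - dist u s0 / δ < 1 := by linarith
      rw [div_sub_div_same] at this
      calc dist v s0 - dist u s0 = (dist v s0 - dist u s0) / δ * δ := by
            field_simp
        _ < 1 * δ := by exact mul_lt_mul_of_pos_right this hδ
        _ = δ := one_mul δ
  have hzD : D ≤ (⌈2 / ε⌉ : ℝ) * δ := by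
    have h1 : (2 / ε : ℝ) ≤ (⌈2 / ε⌉ : ℝ) := Int.le_ceil _
    have h2 : (2 / ε) * δ ≤ (⌈2 / ε⌉ : ℝ) * δ := mul_le_mul_of_nonneg_right h1 hδ.le
    have h3 : (2 / ε) * δ = D := by rw [hδdef]; field_simp
    linarith
  -- key one-sided step
  have step : ∀ p q : X,
      {pp : Fin k × ℤ | 1 ≤ (pp.1 : ℕ) ∧ -⌈2 / ε⌉ ≤ pp.2 ∧ pp.2 ≤ ⌈2 / ε⌉ ∧
          dist p (s pp.1) - dist p (s ⟨0, hk⟩) ≤ (pp.2 : ℝ) * (ε * D / 2)}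
      = {pp : Fin k × ℤ | 1 ≤ (pp.1 : ℕ) ∧ -⌈2 / ε⌉ ≤ pp.2 ∧ pp.2 ≤ ⌈2 / ε⌉ ∧
          dist q (s pp.1) - dist q (s ⟨0, hk⟩) ≤ (pp.2 : ℝ) * (ε * D / 2)} →
      ∀ i : Fin k, 1 ≤ (i : ℕ) →
      dist q (s i) - dist q s0 < dist p (s i) - dist p s0 + δ := by
    intro p q hset i hi
    set a : ℝ := dist p (s i) - dist p s0 with ha
    have haD : |a| ≤ D := by
      have := abs_dist_sub_le (s i) s0 p
      rw [dist_comm (s i) p, dist_comm s0 p] at this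
      exact this.trans (hbdd _ _)
    rw [abs_le] at haD
    set j : ℤ := ⌈a / δ⌉ with hj
    have hj1 : a ≤ (j : ℝ) * δ := by
      have := Int.le_ceil (a / δ)
      calc a = a / δ * δ := by field_simp
        _ ≤ (j : ℝ) * δ := mul_le_mul_of_nonneg_right this hδ.le
    have hj2 : (j : ℝ) * δ < a + δ := by
      have h := Int.ceil_lt_add_one (a / δ)
      calc (j : ℝ) * δ < (a / δ + 1) * δ := mul_lt_mul_of_pos_right h hδ
        _ = a + δ := by field_simp
    have hjub : j ≤ ⌈2 / ε⌉ := by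
      apply Int.ceil_le.mpr
      rw [div_le_iff₀ hδ]
      linarith
    have hjlb : -⌈2 / ε⌉ ≤ j := by
      have h1 : (-⌈2 / ε⌉ : ℝ) ≤ a / δ := by
        rw [le_div_iff₀ hδ]
        push_cast
        nlinarith
      exact_mod_cast h1.trans (Int.le_ceil _)
    have hmem : (⟨i, j⟩ : Fin k × ℤ) ∈
        {pp : Fin k × ℤ | 1 ≤ (pp.1 : ℕ) ∧ -⌈2 / ε⌉ ≤ pp.2 ∧ pp.2 ≤ ⌈2 / ε⌉ ∧
          dist p (s pp.1) - dist p (s ⟨0, hk⟩) ≤ (pp.2 : ℝ) * (ε * D / 2)} :=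
      ⟨hi, hjlb, hjub, by rw [← hs0, ← hδdef]; exact hj1⟩
    rw [hset] at hmem
    have hb : dist q (s i) - dist q s0 ≤ (j : ℝ) * δ := by
      have := hmem.2.2.2
      rw [← hs0, ← hδdef] at this
      exact this
    linarith
  intro i
  rcases Nat.eq_zero_or_pos (i : ℕ) with hi | hi
  · have : i = ⟨0, hk⟩ := Fin.ext hi
    rw [this, ← hs0]
    have : δ ≤ ε * D := by rw [hδdef]; nlinarith
    linarith [h0, le_abs_self (dist u s0 - dist v s0), neg_abs_le (dist u s0 - dist v s0)]
  · have h1 := step u v hX i hi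
    have h2 := step v u hX.symm i hi
    rw [abs_sub_lt_iff] at h0
    rw [abs_le]
    have hsum : δ + δ = ε * D := by rw [hδdef]; ring
    constructor <;> nlinarith [h0.1, h0.2]
end

section
/- Let (X,d) be a pseudometric space and D > 0 with d(x,y) ≤ D for all x,y ∈ X. Let ε > 0, set δ = εD/2 and z = ⌈2/ε⌉. Let k ≥ 1, h ≥ 1, and s₀,…,s_{k−1} ∈ X. For v ∈ X let X̂_v = {(i,j) : i ∈ ℤ, 1 ≤ i ≤ k−1, j ∈ ℤ, −z ≤ j ≤ z, d(v,s_i) − d(v,s₀) ≤ j·δ}, a subset of the finite ground set Ω = {1,…,k−1} × {−z,…,z}. Assume that no h-element subset of Ω is shattered by the family F = {X̂_v : v ∈ X}, i.e., for every Y ⊆ Ω with |Y| = h there exists Z ⊆ Y such that Z ≠ A ∩ Y for all A ∈ F. Then every subset U ⊆ X admits a subset U' ⊆ U with |U'| ≤ (z+1) · Σ_{i=0}^{h−1} C((k−1)(2z+1), i) (where C(m,i) is the binomial coefficient) such that for every u ∈ U there is u' ∈ U' with |d(u,s_i) − d(u',s_i)| ≤ εD for all 0 ≤ i ≤ k−1.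 -/
/-!
Put `δ = εD/2` and classify `v ∈ X` by the pair `(⌊d(v,s₀)/δ⌋, X̂_v ∩ Ω)`. Since `zδ ≥ D`, the
thresholds `jδ`, `|j| ≤ z`, cover the range `[-D, D]` of `d(v,sᵢ) − d(v,s₀)`, so two points of
the same class have both `d(·,s₀)` and `d(·,sᵢ) − d(·,s₀)` within `δ` of each other, hence all
distances to the `sᵢ` within `2δ = εD`. There are at most `z + 1` floors and, by the
Sauer–Shelah lemma, at most `∑_{i<h} C(|Ω|, i)` traces; one representative per class is `U'`.
-/

open Finset

namespace Finset

variable {α ι : Type*}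

theorem card_le_sum_choose_of_not_shatters [DecidableEq α] {Ω : Finset α}
    {𝒜 : Finset (Finset α)} {h : ℕ} (h𝒜 : ∀ t ∈ 𝒜, t ⊆ Ω) (hs : ∀ Y ⊆ Ω, #Y = h → ¬ 𝒜.Shatters Y) :
    #𝒜 ≤ ∑ i ∈ range h, (#Ω).choose i := by
  calc #𝒜 ≤ #𝒜.shatterer := card_le_card_shatterer 𝒜
    _ ≤ #((range h).biUnion Ω.powersetCard) := card_le_card fun Y hY => by
        rw [mem_shatterer] at hY
        have hYΩ : Y ⊆ Ω := let ⟨t, ht, hYt⟩ := hY.exists_superset; hYt.trans (h𝒜 t ht)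
        have hYh : #Y < h := by
          by_contra! hle
          obtain ⟨Y', hY'Y, hY'⟩ := exists_subset_card_eq hle
          exact hs Y' (hY'Y.trans hYΩ) hY' (hY.mono_right hY'Y)
        exact mem_biUnion.2 ⟨#Y, mem_range.2 hYh, mem_powersetCard.2 ⟨hYΩ, rfl⟩⟩
    _ ≤ ∑ i ∈ range h, #(Ω.powersetCard i) := card_biUnion_le
    _ = ∑ i ∈ range h, (#Ω).choose i := by simp_rw [card_powersetCard]

open Classical in
noncomputable def traces (Ω : Finset α) (S : ι → Set α) : Finset (Finset α) :=
  Ω.powerset.filter fun t => ∃ i, Ω.filter (· ∈ S i) = t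

open Classical in
theorem mem_traces {Ω : Finset α} {S : ι → Set α} {t : Finset α} :
    t ∈ traces Ω S ↔ ∃ i, Ω.filter (· ∈ S i) = t := by
  refine mem_filter.trans ⟨And.right, fun ht => ⟨?_, ht⟩⟩
  obtain ⟨i, rfl⟩ := ht
  exact mem_powerset.2 (filter_subset _ _)

theorem Shatters.exists_eq_inter_of_traces [DecidableEq α] {Ω Y : Finset α} {S : ι → Set α}
    (hY : (traces Ω S).Shatters Y) {Z : Set α} (hZ : Z ⊆ Y) : ∃ i, Z = S i ∩ Y := by
  classical
  have hYΩ : Y ⊆ Ω := by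
    obtain ⟨t, ht, hYt⟩ := hY.exists_superset
    obtain ⟨i, rfl⟩ := mem_traces.1 ht
    exact hYt.trans (filter_subset _ _)
  obtain ⟨t, ht, hYt⟩ := hY (filter_subset (· ∈ Z) Y)
  obtain ⟨i, rfl⟩ := mem_traces.1 ht
  refine ⟨i, Set.ext fun p => ?_⟩
  have := Finset.ext_iff.1 hYt p
  simp only [mem_inter, mem_filter] at this
  constructor
  · intro hp
    exact ⟨(this.2 ⟨hZ hp, hp⟩).2.2, hZ hp⟩
  · rintro ⟨hpS, hpY⟩
    exact (this.1 ⟨hpY, hYΩ hpY, hpS⟩).2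

theorem card_traces_le_sum_choose [DecidableEq α] {Ω : Finset α} {S : ι → Set α} {h : ℕ}
    (hVC : ∀ Y ⊆ Ω, #Y = h → ∃ Z ⊆ (Y : Set α), ∀ i, Z ≠ S i ∩ Y) :
    #(traces Ω S) ≤ ∑ i ∈ range h, (#Ω).choose i := by
  classical
  refine card_le_sum_choose_of_not_shatters (fun t ht => ?_) fun Y hYΩ hYh hY => ?_
  · obtain ⟨i, rfl⟩ := mem_traces.1 ht
    exact filter_subset _ _
  · obtain ⟨Z, hZY, hZ⟩ := hVC Y hYΩ hYh
    obtain ⟨i, hi⟩ := hY.exists_eq_inter_of_traces hZY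
    exact hZ i hi

end Finset

theorem Set.exists_subset_ncard_le_of_mapsTo {X β : Type*} {U : Set X} {Φ : X → β}
    {T : Finset β} (hΦ : Set.MapsTo Φ U T) :
    ∃ U' ⊆ U, U'.Finite ∧ U'.ncard ≤ #T ∧ ∀ u ∈ U, ∃ u' ∈ U', Φ u' = Φ u := by
  obtain ⟨U', hU'U, hbij⟩ := Set.exists_subset_bijOn U Φ
  have himage : Φ '' U ⊆ T := hΦ.image_subset
  refine ⟨U', hU'U, ((T.finite_toSet.subset himage).subset hbij.mapsTo.image_subset
    |>.of_finite_image hbij.injOn), ?_, fun u hu => ?_⟩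
  · rw [hbij.ncard_eq]
    simpa using Set.ncard_le_ncard himage T.finite_toSet
  · exact hbij.surjOn ⟨u, hu, rfl⟩

theorem lt_add_of_le_int_mul_imp {a b δ : ℝ} {z : ℕ} (hδ : 0 < δ) (hb : |b| ≤ z * δ)
    (H : ∀ j : ℤ, -(z : ℤ) ≤ j → j ≤ z → b ≤ j * δ → a ≤ j * δ) : a < b + δ := by
  have hbδ : |b / δ| ≤ z := by rwa [abs_div, abs_of_pos hδ, div_le_iff₀ hδ]
  rw [abs_le] at hbδ
  have hj : b ≤ ⌈b / δ⌉ * δ := (div_le_iff₀ hδ).1 (Int.le_ceil _)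
  have hj' : (⌈b / δ⌉ : ℝ) * δ < b + δ := by
    have := mul_lt_mul_of_pos_right (Int.ceil_lt_add_one (b / δ)) hδ
    rwa [add_mul, one_mul, div_mul_cancel₀ _ hδ.ne'] at this
  refine (H _ ?_ (Int.ceil_le.2 (by exact_mod_cast hbδ.2)) hj).trans_lt hj'
  exact Int.cast_le.1 (by push_cast; exact hbδ.1.trans (Int.le_ceil _))

theorem abs_sub_lt_of_le_int_mul_iff {a b δ : ℝ} {z : ℕ} (hδ : 0 < δ)
    (ha : |a| ≤ z * δ) (hb : |b| ≤ z * δ)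
    (H : ∀ j : ℤ, -(z : ℤ) ≤ j → j ≤ z → (a ≤ j * δ ↔ b ≤ j * δ)) : |a - b| < δ := by
  have hab := lt_add_of_le_int_mul_imp hδ hb fun j hj hj' => (H j hj hj').2
  have hba := lt_add_of_le_int_mul_imp hδ ha fun j hj hj' => (H j hj hj').1
  rw [abs_sub_lt_iff]
  constructor <;> linarith

theorem abs_dist_sub_lt_two_mul {X : Type*} [PseudoMetricSpace X] {u u' s₀ t : X} {δ : ℝ}
    {z : ℕ} (hδ : 0 < δ) (ht : dist t s₀ ≤ z * δ)
    (hfloor : ⌊dist u s₀ / δ⌋ = ⌊dist u' s₀ / δ⌋)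
    (hlevel : ∀ j : ℤ, -(z : ℤ) ≤ j → j ≤ z →
      (dist u t - dist u s₀ ≤ j * δ ↔ dist u' t - dist u' s₀ ≤ j * δ)) :
    |dist u t - dist u' t| < 2 * δ := by
  have hlevel_bound : ∀ v, |dist v t - dist v s₀| ≤ z * δ := fun v => by
    rw [dist_comm v, dist_comm v]; exact (abs_dist_sub_le t s₀ v).trans ht
  have h₁ := abs_sub_lt_of_le_int_mul_iff hδ (hlevel_bound u) (hlevel_bound u') hlevel
  have h₀ : |dist u s₀ - dist u' s₀| < δ := by
    have := Int.abs_sub_lt_one_of_floor_eq_floor hfloor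
    rwa [← sub_div, abs_div, abs_of_pos hδ, div_lt_one hδ] at this
  rw [abs_sub_lt_iff] at h₀ h₁ ⊢
  constructor <;> linarith

noncomputable def groundSet (k z : ℕ) : Finset (Fin k × ℤ) :=
  univ.filter (fun i : Fin k => 1 ≤ (i : ℕ)) ×ˢ Icc (-(z : ℤ)) z

theorem mem_groundSet {k z : ℕ} {p : Fin k × ℤ} :
    p ∈ groundSet k z ↔ 1 ≤ (p.1 : ℕ) ∧ -(z : ℤ) ≤ p.2 ∧ p.2 ≤ z := by
  simp [groundSet]

theorem card_groundSet (k z : ℕ) : #(groundSet k z) = (k - 1) * (2 * z + 1) := by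
  have hfst := card_filter_add_card_filter_not (s := (univ : Finset (Fin k))) (fun i => (i : ℕ) < 1)
  rw [Fin.card_filter_val_lt, card_univ, Fintype.card_fin] at hfst
  simp only [not_lt] at hfst
  rw [groundSet, card_product, Int.card_Icc]
  congr 1 <;> omega

section Classes

variable {X : Type*} [PseudoMetricSpace X] {k : ℕ} (s : Fin k → X) (i₀ : Fin k) (z : ℕ) (δ : ℝ)

def thresholdSet (v : X) : Set (Fin k × ℤ) :=
  {p | 1 ≤ (p.1 : ℕ) ∧ -(z : ℤ) ≤ p.2 ∧ p.2 ≤ z ∧ dist v (s p.1) - dist v (s i₀) ≤ p.2 * δ}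

variable {s i₀ z δ}

open Classical in
theorem abs_dist_sub_lt_of_floor_eq_of_trace_eq (hi₀ : (i₀ : ℕ) = 0) (hδ : 0 < δ)
    (hbdd : ∀ x y : X, dist x y ≤ z * δ) {u u' : X}
    (hfloor : ⌊dist u (s i₀) / δ⌋ = ⌊dist u' (s i₀) / δ⌋)
    (htrace : (groundSet k z).filter (· ∈ thresholdSet s i₀ z δ u) =
      (groundSet k z).filter (· ∈ thresholdSet s i₀ z δ u')) (i : Fin k) :
    |dist u (s i) - dist u' (s i)| < 2 * δ := by
  refine abs_dist_sub_lt_two_mul hδ (hbdd _ _) hfloor fun j hj hj' => ?_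
  by_cases hi : 1 ≤ (i : ℕ)
  · simpa [thresholdSet, mem_groundSet, hi, hj, hj'] using Finset.ext_iff.1 htrace (i, j)
  · obtain rfl : i = i₀ := Fin.ext (by omega)
    simp

end Classes

theorem floor_div_mem_Icc {a δ : ℝ} {z : ℕ} (hδ : 0 < δ) (ha₀ : 0 ≤ a) (ha : a ≤ z * δ) :
    ⌊a / δ⌋ ∈ Icc 0 (z : ℤ) := by
  have had : a / δ ≤ z := (div_le_iff₀ hδ).2 ha
  exact mem_Icc.2 ⟨by positivity, (Int.floor_le_floor had).trans_eq (Int.floor_natCast z)⟩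

theorem stmt2_general {X : Type*} [PseudoMetricSpace X] (D : ℝ) (hD : 0 < D)
    (hbdd : ∀ x y : X, dist x y ≤ D) (ε : ℝ) (hε : 0 < ε)
    (k h : ℕ) (hk : 1 ≤ k) (s : Fin k → X)
    (Xhat : X → Set (Fin k × ℤ))
    (hXhat : ∀ v : X, Xhat v =
      {p : Fin k × ℤ | 1 ≤ (p.1 : ℕ) ∧ -(⌈2 / ε⌉₊ : ℤ) ≤ p.2 ∧ p.2 ≤ (⌈2 / ε⌉₊ : ℤ) ∧
        dist v (s p.1) - dist v (s ⟨0, hk⟩) ≤ (p.2 : ℝ) * (ε * D / 2)})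
    (Ω : Set (Fin k × ℤ))
    (hΩ : Ω = {p : Fin k × ℤ | 1 ≤ (p.1 : ℕ) ∧ -(⌈2 / ε⌉₊ : ℤ) ≤ p.2 ∧ p.2 ≤ (⌈2 / ε⌉₊ : ℤ)})
    (hVC : ∀ Y : Set (Fin k × ℤ), Y ⊆ Ω → Y.ncard = h →
      ∃ Z ⊆ Y, ∀ v : X, Z ≠ Xhat v ∩ Y) :
    ∀ U : Set X, ∃ U' ⊆ U, U'.Finite ∧
      U'.ncard ≤ (⌈2 / ε⌉₊ + 1) *
        ∑ i ∈ Finset.range h, ((k - 1) * (2 * ⌈2 / ε⌉₊ + 1)).choose i ∧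
      ∀ u ∈ U, ∃ u' ∈ U', ∀ i : Fin k, |dist u (s i) - dist u' (s i)| ≤ ε * D := by
  classical
  intro U
  set z := ⌈2 / ε⌉₊
  set δ := ε * D / 2 with hδ_def
  have hδ : 0 < δ := by positivity
  have hDz : D ≤ z * δ := calc
    D = 2 / ε * δ := by rw [hδ_def]; field_simp
    _ ≤ z * δ := by gcongr; exact Nat.le_ceil _
  obtain rfl : Xhat = thresholdSet s ⟨0, hk⟩ z δ := funext hXhat
  have hΩ' : Ω = groundSet k z := by ext p; simp [hΩ, mem_groundSet]
  have hVC' := card_traces_le_sum_choose (S := thresholdSet s ⟨0, hk⟩ z δ) (h := h)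
    fun Y hY hYh => hVC Y (hΩ' ▸ coe_subset.2 hY) (by rwa [Set.ncard_coe_finset])
  obtain ⟨U', hU'U, hfin, hcard, hcover⟩ := Set.exists_subset_ncard_le_of_mapsTo (U := U)
    (Φ := fun v => (⌊dist v (s ⟨0, hk⟩) / δ⌋,
      (groundSet k z).filter (· ∈ thresholdSet s ⟨0, hk⟩ z δ v)))
    (T := Icc 0 (z : ℤ) ×ˢ traces (groundSet k z) (thresholdSet s ⟨0, hk⟩ z δ))
    fun v _ => mem_product.2
      ⟨floor_div_mem_Icc hδ dist_nonneg ((hbdd _ _).trans hDz), mem_traces.2 ⟨v, rfl⟩⟩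
  refine ⟨U', hU'U, hfin, hcard.trans ?_, fun u hu => ?_⟩
  · rw [card_product, Int.card_Icc, ← card_groundSet]
    simpa using Nat.mul_le_mul_left (z + 1) hVC'
  · obtain ⟨u', hu', hclass⟩ := hcover u hu
    refine ⟨u', hu', fun i => ?_⟩
    have := abs_dist_sub_lt_of_floor_eq_of_trace_eq rfl hδ (fun x y => (hbdd x y).trans hDz)
      (congrArg Prod.fst hclass).symm (congrArg Prod.snd hclass).symm i
    linarith

/-- Existence of an `(εD)`-additive core-set of size
`(z+1)·Σ_{i<h} C((k−1)(2z+1), i)`, assuming the family `{X̂_v}` has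
VC dimension at most `h − 1` on the ground set `Ω`. -/
theorem stmt2 {X : Type*} [PseudoMetricSpace X] (D : ℝ) (hD : 0 < D)
    (hbdd : ∀ x y : X, dist x y ≤ D) (ε : ℝ) (hε : 0 < ε)
    (k h : ℕ) (hk : 1 ≤ k) (hh : 1 ≤ h) (s : Fin k → X)
    (Xhat : X → Set (Fin k × ℤ))
    (hXhat : ∀ v : X, Xhat v =
      {p : Fin k × ℤ | 1 ≤ (p.1 : ℕ) ∧ -(⌈2 / ε⌉₊ : ℤ) ≤ p.2 ∧ p.2 ≤ (⌈2 / ε⌉₊ : ℤ) ∧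
        dist v (s p.1) - dist v (s ⟨0, hk⟩) ≤ (p.2 : ℝ) * (ε * D / 2)})
    (Ω : Set (Fin k × ℤ))
    (hΩ : Ω = {p : Fin k × ℤ | 1 ≤ (p.1 : ℕ) ∧ -(⌈2 / ε⌉₊ : ℤ) ≤ p.2 ∧ p.2 ≤ (⌈2 / ε⌉₊ : ℤ)})
    (hVC : ∀ Y : Set (Fin k × ℤ), Y ⊆ Ω → Y.ncard = h →
      ∃ Z ⊆ Y, ∀ v : X, Z ≠ Xhat v ∩ Y) :
    ∀ U : Set X, ∃ U' ⊆ U, U'.Finite ∧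
      U'.ncard ≤ (⌈2 / ε⌉₊ + 1) *
        ∑ i ∈ Finset.range h, ((k - 1) * (2 * ⌈2 / ε⌉₊ + 1)).choose i ∧
      ∀ u ∈ U, ∃ u' ∈ U', ∀ i : Fin k, |dist u (s i) - dist u' (s i)| ≤ ε * D :=
  stmt2_general D hD hbdd ε hε k h hk s Xhat hXhat Ω hΩ hVC
end

section
/- Let (X,d) be a pseudometric space, k ≥ 1, s₀,…,s_{k−1} ∈ X, and for v ∈ X let Φ(v) = (d(v,s₀),…,d(v,s_{k−1})) ∈ ℝ^k. Let U ⊆ X, δ > 0, and y : U → ℝ^k with ‖y(u) − Φ(u)‖_∞ ≤ δ for all u ∈ U. Suppose Û ⊆ U satisfies ‖y(u) − y(u')‖_∞ > 3δ for all distinct u, u' ∈ Û. Then ‖Φ(u) − Φ(u')‖_∞ > δ for all distinct u, u' ∈ Û; consequently, if U' is a finite (δ/2)-additive core-set of U, then Û is finite and |Û| ≤ |U'|. -/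
/-- Size bound for the greedy core-set: a set that is `3δ`-separated in the
perturbed vectors `y` is `δ`-separated in the true distance tuples, hence its
cardinality is bounded by that of any finite `(δ/2)`-additive core-set of `U`.
The norm on `Fin k → ℝ` is the sup-norm. -/
theorem stmt4 {X : Type*} [PseudoMetricSpace X] (k : ℕ) (hk : 1 ≤ k) (s : Fin k → X)
    (U : Set X) (δ : ℝ) (hδ : 0 < δ) (y : X → (Fin k → ℝ))
    (hy : ∀ u ∈ U, ‖y u - (fun i => dist u (s i))‖ ≤ δ)
    (Uhat : Set X) (hsub : Uhat ⊆ U)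
    (hsep : ∀ u ∈ Uhat, ∀ u' ∈ Uhat, u ≠ u' → 3 * δ < ‖y u - y u'‖) :
    (∀ u ∈ Uhat, ∀ u' ∈ Uhat, u ≠ u' →
      δ < ‖(fun i => dist u (s i)) - (fun i => dist u' (s i))‖) ∧
    ∀ U' : Set X, U' ⊆ U → U'.Finite →
      (∀ u ∈ U, ∃ u' ∈ U',
        ‖(fun i => dist u (s i)) - (fun i => dist u' (s i))‖ ≤ δ / 2) →
      Uhat.Finite ∧ Uhat.ncard ≤ U'.ncard := by
  set Φ : X → (Fin k → ℝ) := fun v i => dist v (s i) with hΦ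
  have key : ∀ u ∈ Uhat, ∀ u' ∈ Uhat, u ≠ u' → δ < ‖Φ u - Φ u'‖ := by
    intro u hu u' hu' hne
    have h1 := hy u (hsub hu)
    have h2 := hy u' (hsub hu')
    have h3 := hsep u hu u' hu' hne
    have t1 : ‖y u - y u'‖ ≤ ‖y u - Φ u‖ + ‖Φ u - y u'‖ :=
      norm_sub_le_norm_sub_add_norm_sub _ _ _
    have t2 : ‖Φ u - y u'‖ ≤ ‖Φ u - Φ u'‖ + ‖Φ u' - y u'‖ :=
      norm_sub_le_norm_sub_add_norm_sub _ _ _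
    have h2' : ‖Φ u' - y u'‖ ≤ δ := by rwa [norm_sub_rev] at h2
    linarith
  refine ⟨key, ?_⟩
  intro U' hU'sub hU'fin hcov
  choose f hf hfd using fun u (hu : u ∈ U) => hcov u hu
  classical
  set g : X → X := fun u => if h : u ∈ U then f u h else u with hg
  have hginj : Set.InjOn g Uhat := by
    intro a ha b hb hab
    by_contra hne
    have hgab : ‖Φ a - Φ b‖ ≤ δ := by
      have h1 := hfd a (hsub ha)
      have h2 := hfd b (hsub hb)
      have : g a = f a (hsub ha) := by simp [hg, hsub ha]
      have hb' : g b = f b (hsub hb) := by simp [hg, hsub hb]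
      have heq : f a (hsub ha) = f b (hsub hb) := by rw [← this, ← hb', hab]
      calc ‖Φ a - Φ b‖ ≤ ‖Φ a - Φ (f a (hsub ha))‖ + ‖Φ (f a (hsub ha)) - Φ b‖ :=
            norm_sub_le_norm_sub_add_norm_sub _ _ _
        _ ≤ δ / 2 + δ / 2 := by
            refine add_le_add h1 ?_
            rw [heq, norm_sub_rev]; exact h2
        _ = δ := by ring
    exact absurd hgab (not_le.mpr (key a ha b hb hne))
  have himg : g '' Uhat ⊆ U' := by
    rintro _ ⟨a, ha, rfl⟩
    have : g a = f a (hsub ha) := by simp [hg, hsub ha]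
    rw [this]; exact hf a (hsub ha)
  have hfin : Uhat.Finite := Set.Finite.of_finite_image (hU'fin.subset himg) hginj
  exact ⟨hfin, by
    calc Uhat.ncard = (g '' Uhat).ncard := (Set.ncard_image_of_injOn hginj).symm
      _ ≤ U'.ncard := Set.ncard_le_ncard himg hU'fin⟩
end

section
/- Let (X,d) be a pseudometric space, δ ≥ 0, ρ ≥ 0, and v ∈ X. Let I be a nonempty finite index set with centers c_i ∈ X (i ∈ I), let B ⊆ X be a nonempty finite set, and let V' ⊆ B be nonempty. Assume: (sep) for every u ∈ B there exists i ∈ I with d(v,c_i) + d(c_i,u) ≤ d(v,u) + 2δ; (apx) a : X × X → ℝ satisfies d(x,y) ≤ a(x,y) ≤ d(x,y) + 2δ for all x,y ∈ X; (core) for every u ∈ B there exists u' ∈ V' with |d(u,c_i) − d(u',c_i)| ≤ ρ for every i ∈ I. Let y = max_{u ∈ B} d(v,u) and x = max_{u ∈ V'} min_{i ∈ I} ( a(v,c_i) + a(c_i,u) ). Then |x − y| ≤ ρ + 6δ, and moreover any u* ∈ V' attaining the maximum in the definition of x satisfies d(v,u*) ≥ y − ρ − 6δ. -/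
/-- Metric content of Claim `corset-analysis`: combining a center-separator
property, a `2δ`-additive approximate distance oracle `a`, and a `ρ`-additive
core-set `V'` of `B`, the quantity `x` estimates the farthest distance `y` from
`v` into `B` within additive error `ρ + 6δ`, and any maximizer is an
approximately farthest point. -/
theorem stmt10 {X : Type*} [PseudoMetricSpace X] (δ ρ : ℝ) (hδ : 0 ≤ δ) (hρ : 0 ≤ ρ)
    (v : X) {I : Type*} [Fintype I] [Nonempty I] (c : I → X)
    (B V' : Finset X) (hBne : B.Nonempty) (hV'B : V' ⊆ B) (hV'ne : V'.Nonempty)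
    (hsep : ∀ u ∈ B, ∃ i : I, dist v (c i) + dist (c i) u ≤ dist v u + 2 * δ)
    (a : X → X → ℝ)
    (ha₁ : ∀ x y : X, dist x y ≤ a x y)
    (ha₂ : ∀ x y : X, a x y ≤ dist x y + 2 * δ)
    (hcore : ∀ u ∈ B, ∃ u' ∈ V', ∀ i : I, |dist u (c i) - dist u' (c i)| ≤ ρ)
    (y x : ℝ)
    (hy : y = B.sup' hBne (fun u => dist v u))
    (hx : x = V'.sup' hV'ne (fun u =>
      Finset.univ.inf' Finset.univ_nonempty (fun i : I => a v (c i) + a (c i) u))) :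
    |x - y| ≤ ρ + 6 * δ ∧
    ∀ ustar ∈ V',
      Finset.univ.inf' Finset.univ_nonempty
        (fun i : I => a v (c i) + a (c i) ustar) = x →
      dist v ustar ≥ y - ρ - 6 * δ := by
  -- f(u) upper bound: for u ∈ B, f(u) ≤ dist v u + 6δ
  have hfub : ∀ u ∈ B,
      Finset.univ.inf' Finset.univ_nonempty (fun i : I => a v (c i) + a (c i) u)
        ≤ dist v u + 6 * δ := by
    intro u hu
    obtain ⟨i, hi⟩ := hsep u hu
    calc Finset.univ.inf' Finset.univ_nonempty (fun i : I => a v (c i) + a (c i) u)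
        ≤ a v (c i) + a (c i) u := Finset.inf'_le _ (Finset.mem_univ i)
      _ ≤ (dist v (c i) + 2 * δ) + (dist (c i) u + 2 * δ) :=
          add_le_add (ha₂ _ _) (ha₂ _ _)
      _ = dist v (c i) + dist (c i) u + 4 * δ := by ring
      _ ≤ dist v u + 2 * δ + 4 * δ := by linarith
      _ = dist v u + 6 * δ := by ring
  -- dist v u ≤ y for u ∈ B
  have hyub : ∀ u ∈ B, dist v u ≤ y := by
    intro u hu; rw [hy]; exact Finset.le_sup' _ hu
  -- x ≤ y + 6δ
  have hxle : x ≤ y + 6 * δ := by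
    rw [hx]
    apply Finset.sup'_le
    intro u hu
    have := hfub u (hV'B hu)
    have := hyub u (hV'B hu)
    linarith
  -- x ≥ y - ρ
  have hxge : y - ρ ≤ x := by
    obtain ⟨u, hu, hueq⟩ := Finset.exists_mem_eq_sup' hBne (fun u => dist v u)
    obtain ⟨u', hu', hd⟩ := hcore u hu
    have hf : y - ρ ≤ Finset.univ.inf' Finset.univ_nonempty
        (fun i : I => a v (c i) + a (c i) u') := by
      apply Finset.le_inf'
      intro i _
      have h1 := hd i
      have h2 : |dist u (c i) - dist u' (c i)| ≤ ρ := h1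
      have h3 : dist u (c i) - dist u' (c i) ≤ ρ := (abs_le.mp h2).2
      have htri : dist v u ≤ dist v (c i) + dist (c i) u' + ρ := by
        have := dist_triangle v (c i) u
        have hcu : dist (c i) u = dist u (c i) := dist_comm _ _
        have hcu' : dist (c i) u' = dist u' (c i) := dist_comm _ _
        linarith
      have := ha₁ v (c i)
      have := ha₁ (c i) u'
      have hyu : y = dist v u := by rw [hy, hueq]
      linarith
    have hle2 : Finset.univ.inf' Finset.univ_nonempty
        (fun i : I => a v (c i) + a (c i) u') ≤ x := by
      rw [hx]
      exact Finset.le_sup' (fun u => Finset.univ.inf' Finset.univ_nonempty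
        (fun i : I => a v (c i) + a (c i) u)) hu'
    linarith
  refine ⟨abs_sub_le_iff.mpr ⟨by linarith, by linarith⟩, ?_⟩
  intro ustar hustar heq
  have := hfub ustar (hV'B hustar)
  linarith
end

section
/- Let (X,d) be a pseudometric space, δ ≥ 0, ρ ≥ 0, and v, c ∈ X with d(v,c) ≤ δ. Let B ⊆ X be a nonempty finite set and V' ⊆ B nonempty with the property that for every u ∈ B there exists u' ∈ V' with |d(u,c) − d(u',c)| ≤ ρ. Let a : X × X → ℝ satisfy d(x,y) ≤ a(x,y) ≤ d(x,y) + 2δ for all x, y ∈ X. Set M = max_{u ∈ B} d(v,u) and let u* ∈ V' maximize a(c, u') over u' ∈ V'. Then M − ρ − δ ≤ a(c,u*) ≤ M + 3δ, and d(v,u*) ≥ M − ρ − 4δ. -/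
/-- Metric content of Case 2 of Claim `ecce`: replacing `v` by the center `c`
of its cluster (at distance `≤ δ`) and maximizing the `2δ`-approximate distance
`a c ·` over a `ρ`-additive core-set `V'` of `B` produces an approximately
farthest point of `B` from `v`. -/
theorem stmt12 {X : Type*} [PseudoMetricSpace X] (δ ρ : ℝ) (hδ : 0 ≤ δ) (hρ : 0 ≤ ρ)
    (v c : X) (hvc : dist v c ≤ δ)
    (B V' : Finset X) (hBne : B.Nonempty) (hV'B : V' ⊆ B) (hV'ne : V'.Nonempty)
    (hcore : ∀ u ∈ B, ∃ u' ∈ V', |dist u c - dist u' c| ≤ ρ)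
    (a : X → X → ℝ)
    (ha₁ : ∀ x y : X, dist x y ≤ a x y)
    (ha₂ : ∀ x y : X, a x y ≤ dist x y + 2 * δ)
    (M : ℝ) (hM : M = B.sup' hBne (fun u => dist v u))
    (ustar : X) (hustar : ustar ∈ V')
    (hmax : ∀ u' ∈ V', a c u' ≤ a c ustar) :
    (M - ρ - δ ≤ a c ustar ∧ a c ustar ≤ M + 3 * δ) ∧
    dist v ustar ≥ M - ρ - 4 * δ := by
  obtain ⟨u0, hu0B, hu0M⟩ := Finset.exists_mem_eq_sup' hBne (fun u => dist v u)
  rw [← hM] at hu0M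
  obtain ⟨u', hu'V, hu'ρ⟩ := hcore u0 hu0B
  have hMle : ∀ u ∈ B, dist v u ≤ M := by
    intro u hu; rw [hM]; exact Finset.le_sup' _ hu
  have h1 : M - ρ - δ ≤ a c ustar := by
    have h2 : dist u0 c - dist u' c ≤ ρ := (abs_le.mp hu'ρ).2
    have h3 : dist v u0 ≤ dist v c + dist c u0 := dist_triangle v c u0
    have h4 : dist c u' ≤ a c u' := ha₁ c u'
    have h5 : a c u' ≤ a c ustar := hmax u' hu'V
    rw [dist_comm c u0, dist_comm c u'] at *
    linarith [hu0M ▸ le_refl M]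
  have h6 : a c ustar ≤ dist c ustar + 2 * δ := ha₂ c ustar
  have h7 : dist c ustar ≤ dist c v + dist v ustar := dist_triangle c v ustar
  have h8 : dist v ustar ≤ M := hMle ustar (hV'B hustar)
  have h9 : dist c v = dist v c := dist_comm c v
  have h10 : dist c ustar ≤ a c ustar := ha₁ c ustar
  have h11 : dist v ustar ≥ dist c ustar - dist c v := by
    have := dist_triangle c v ustar; linarith
  exact ⟨⟨h1, by linarith⟩, by linarith⟩
end
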